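/- Let V and V' be left vector spaces of finite dimensions n and n' over division rings R and R', let k ∈ {2,…,n−2} and k' ∈ {2,…,n'−2}. For every embedding f of the Grassmann graph Γ_k(V) in the Grassmann graph Γ_{k'}(V'), the image of every maximal clique of Γ_k(V) under f is contained in precisely one maximal clique of Γ_{k'}(V'). -/

import Mathlib

open Module

/-- The Grassmann graph `Γ_k(V)`: vertices are the `k`-dimensional subspaces of `V`,
two distinct vertices being adjacent iff their intersection has dimension `k - 1`. -/
def grassmannGraph (R V : Type*) [DivisionRing R] [AddCommGroup V] [Module R V] (k : ℕ) :
    SimpleGraph {W : Submodule R V // Module.finrank R W = k} where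
  Adj X Y := X ≠ Y ∧ Module.finrank R ↥(X.1 ⊓ Y.1) = k - 1
  symm := by
    constructor
    rintro X Y ⟨h1, h2⟩
    exact ⟨h1.symm, by rwa [inf_comm]⟩
  loopless := by
    constructor
    rintro X ⟨h1, _⟩
    exact h1 rfl

/-- A graph embedding: an injective map such that adjacency holds iff it holds for images. -/
def IsGraphEmbedding {α β : Type*} (G : SimpleGraph α) (G' : SimpleGraph β) (f : α → β) : Prop :=
  Function.Injective f ∧ ∀ a b, G.Adj a b ↔ G'.Adj (f a) (f b)

/-- An isometric embedding: a graph embedding preserving distances. -/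
def IsIsometricEmbedding {α β : Type*} (G : SimpleGraph α) (G' : SimpleGraph β) (f : α → β) : Prop :=
  IsGraphEmbedding G G' f ∧ ∀ a b, G'.dist (f a) (f b) = G.dist a b

/-- A maximal clique in a graph. -/
def IsMaxClique {α : Type*} (G : SimpleGraph α) (C : Set α) : Prop :=
  G.IsClique C ∧ ∀ D : Set α, G.IsClique D → C ⊆ D → C = D

/-- A semilinear `m`-embedding: an injective semilinear map sending every linearly
independent `m`-element subset to a linearly independent (`m`-element) subset. -/
def IsSemilinearMEmbedding {R R' V V' : Type*} [DivisionRing R] [DivisionRing R']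
    [AddCommGroup V] [Module R V] [AddCommGroup V'] [Module R' V']
    (σ : R →+* R') (l : V →ₛₗ[σ] V') (m : ℕ) : Prop :=
  Function.Injective l ∧ ∀ s : Finset V, s.card = m →
    LinearIndependent R (fun x : s => (x : V)) → LinearIndependent R' (fun x : s => l x)

/-!
A maximal clique of `Γ_k(V)` is either a star `{S | Z ≤ S}` with `dim Z = k - 1` or a top
`{S | S ≤ U}` with `dim U = k + 1`; a star and a top meet at most in a line
`{S | Z ≤ S ≤ U}`. Hence a clique containing three vertices not on a common line lies in exactly
one maximal clique. Collinearity of a triangle `X, Y, W` has a graph-theoretic description: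
every vertex `A ≠ W` adjacent to `X` and `Y` is adjacent to `W`. For `2 ≤ k ≤ n - 2` every
maximal clique contains a non-collinear triangle, and such a triangle admits a vertex adjacent
to two of its vertices but not to the third. An embedding preserves this, so it maps a
non-collinear triangle to a non-collinear one, and the image of a maximal clique lies in exactly
one maximal clique (one exists by Zorn's lemma).
-/

open Submodule

section Graph

variable {α β : Type*} {G : SimpleGraph α} {G' : SimpleGraph β}

theorem IsMaxClique.nonempty [Nonempty α] {C : Set α} (hC : IsMaxClique G C) : C.Nonempty := by
  obtain ⟨a⟩ := ‹Nonempty α›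
  rcases C.eq_empty_or_nonempty with rfl | h
  · exact absurd (hC.2 {a} (G.isClique_singleton a) (Set.empty_subset _))
      (Set.singleton_nonempty a).ne_empty.symm
  · exact h

theorem IsMaxClique.exists_ne {C : Set α} (hC : IsMaxClique G C) (hG : ∀ x, ∃ y, G.Adj x y)
    (x : α) : ∃ y ∈ C, y ≠ x := by
  by_contra! h
  obtain ⟨y, hxy⟩ := hG x
  have hC_eq : C = {x, y} :=
    hC.2 _ (G.isClique_pair.mpr fun _ => hxy) fun z hz => h z hz ▸ Set.mem_insert z _
  exact hxy.ne (h y (hC_eq ▸ Set.mem_insert_of_mem x rfl)).symm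

theorem exists_isMaxClique_superset {S : Set α} (hS : G.IsClique S) :
    ∃ M, IsMaxClique G M ∧ S ⊆ M := by
  obtain ⟨M, hSM, hM⟩ := zorn_subset_nonempty {D | G.IsClique D}
    (fun c hc hchain _ => ⟨⋃₀ c, (SimpleGraph.isClique_sUnion hchain.directedOn).mpr hc,
      fun _ => Set.subset_sUnion_of_mem⟩) S hS
  exact ⟨M, ⟨hM.1, fun _ hD hMD => hM.eq_of_subset hD hMD⟩, hSM⟩

theorem IsGraphEmbedding.isClique_image {f : α → β} (hf : IsGraphEmbedding G G' f) {C : Set α}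
    (hC : G.IsClique C) : G'.IsClique (f '' C) := by
  rintro _ ⟨a, ha, rfl⟩ _ ⟨b, hb, rfl⟩ hne
  exact (hf.2 a b).1 (hC ha hb (ne_of_apply_ne f hne))

end Graph

section LinearAlgebra

variable {R V : Type*} [DivisionRing R] [AddCommGroup V] [Module R V]

namespace Submodule

theorem exists_notMem_of_finrank_lt {U : Submodule R V} (h : finrank R U < finrank R V) :
    ∃ v, v ∉ U :=
  let ⟨v, _, hv⟩ := SetLike.exists_of_lt (lt_top_of_finrank_lt_finrank h)
  ⟨v, hv⟩

variable [FiniteDimensional R V]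

theorem exists_le_finrank_eq (q : Submodule R V) {m : ℕ} (hm : m ≤ finrank R q) :
    ∃ p ≤ q, finrank R p = m := by
  induction m with
  | zero => exact ⟨⊥, bot_le, finrank_bot R V⟩
  | succ m ih =>
    obtain ⟨p, hpq, hp⟩ := ih (by omega)
    obtain ⟨v, hvq, hvp⟩ := SetLike.exists_of_lt (lt_of_le_of_ne hpq (by rintro rfl; omega))
    exact ⟨p ⊔ span R {v}, sup_le hpq ((span_singleton_le_iff_mem v q).mpr hvq),
      by rw [finrank_sup_span_singleton hvp, hp]⟩

theorem exists_le_finrank_add_one_eq_notMem {U : Submodule R V} {z : V} (hzU : z ∈ U)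
    (hz : z ≠ 0) : ∃ H ≤ U, finrank R H + 1 = finrank R U ∧ z ∉ H := by
  obtain ⟨T, hT⟩ := (span R {z}).exists_isCompl
  have hzT : z ∉ T := fun h => hz (disjoint_def.mp hT.disjoint z (mem_span_singleton_self z) h)
  -- modularity: `(span {z} ⊔ T) ⊓ U = span {z} ⊔ T ⊓ U` since `span {z} ≤ U`
  have hsup : T ⊓ U ⊔ span R {z} = U := by
    rw [sup_comm, ← sup_inf_assoc_of_le T ((span_singleton_le_iff_mem z U).mpr hzU),
      hT.sup_eq_top, top_inf_eq]
  have hzTU : z ∉ T ⊓ U := fun h => hzT (mem_inf.mp h).1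
  exact ⟨T ⊓ U, inf_le_right, by rw [← finrank_sup_span_singleton hzTU, hsup], hzTU⟩

theorem sup_eq_of_ne_of_finrank_eq {A B X : Submodule R V} (hA : A ≤ X) (hB : B ≤ X)
    (hAB : A ≠ B) (hfin : finrank R A = finrank R B) (hX : finrank R X ≤ finrank R A + 1) :
    A ⊔ B = X := by
  have hlt : finrank R A < finrank R ↥(A ⊔ B) := finrank_lt_finrank_of_lt
    (left_lt_sup.mpr fun h => hAB (eq_of_le_of_finrank_eq h hfin.symm).symm)
  exact eq_of_le_of_finrank_le (sup_le hA hB) (by omega)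

theorem inf_eq_of_ne_of_finrank_eq {A B X : Submodule R V} (hA : X ≤ A) (hB : X ≤ B)
    (hAB : A ≠ B) (hfin : finrank R A = finrank R B) (hX : finrank R A ≤ finrank R X + 1) :
    A ⊓ B = X := by
  have hlt : finrank R ↥(A ⊓ B) < finrank R A := finrank_lt_finrank_of_lt
    (inf_lt_left.mpr fun h => hAB (eq_of_le_of_finrank_eq h hfin))
  exact (eq_of_le_of_finrank_le (le_inf hA hB) (by omega)).symm

end Submodule

end LinearAlgebra

/-- For adjacent vertices `X, Y` of `Γ_k(V)`: `W` lies on the line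
`{S | X ⊓ Y ≤ S ≤ X ⊔ Y}` of `Γ_k(V)` through them. -/
def IsOnLine {R V : Type*} [DivisionRing R] [AddCommGroup V] [Module R V]
    (X Y W : Submodule R V) : Prop :=
  X ⊓ Y ≤ W ∧ W ≤ X ⊔ Y

def grassmannStar {R V : Type*} [DivisionRing R] [AddCommGroup V] [Module R V] {k : ℕ}
    (Z : Submodule R V) : Set {W : Submodule R V // finrank R W = k} :=
  {X | Z ≤ X.1}

def grassmannTop {R V : Type*} [DivisionRing R] [AddCommGroup V] [Module R V] {k : ℕ}
    (U : Submodule R V) : Set {W : Submodule R V // finrank R W = k} :=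
  {X | X.1 ≤ U}

namespace grassmannGraph

variable {R V : Type*} [DivisionRing R] [AddCommGroup V] [Module R V] {k : ℕ}

local notation "𝔾" => {W : Submodule R V // finrank R W = k}

theorem ne_of_mem_of_notMem {X Y : 𝔾} {v : V} (hX : v ∈ X.1) (hY : v ∉ Y.1) : X ≠ Y :=
  ne_of_apply_ne Subtype.val (ne_of_mem_of_not_mem' hX hY)

theorem ne_and_not_adj_of_finrank_inf_lt {A W : 𝔾} (h : finrank R ↥(A.1 ⊓ W.1) < k - 1) :
    A ≠ W ∧ ¬(grassmannGraph R V k).Adj A W := by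
  refine ⟨?_, fun hAW => by rw [hAW.2] at h; omega⟩
  rintro rfl
  rw [inf_idem, A.2] at h
  omega

variable [FiniteDimensional R V]

theorem finrank_inf_lt {X Y : 𝔾} (h : X ≠ Y) : finrank R ↥(X.1 ⊓ Y.1) < k := by
  refine ((finrank_mono inf_le_left).trans_eq X.2).lt_of_ne fun hk => h (Subtype.ext ?_)
  exact (eq_of_le_of_finrank_eq inf_le_left (hk.trans X.2.symm)).symm.trans
    (eq_of_le_of_finrank_eq inf_le_right (hk.trans Y.2.symm))

theorem adj_of_le_finrank_inf {X Y : 𝔾} (h : X ≠ Y) (hle : k - 1 ≤ finrank R ↥(X.1 ⊓ Y.1)) :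
    (grassmannGraph R V k).Adj X Y :=
  ⟨h, by have := finrank_inf_lt h; omega⟩

theorem adj_of_finrank_sup_le {X Y : 𝔾} (h : X ≠ Y) (hle : finrank R ↥(X.1 ⊔ Y.1) ≤ k + 1) :
    (grassmannGraph R V k).Adj X Y := by
  have := finrank_sup_add_finrank_inf_eq X.1 Y.1
  have := finrank_inf_lt h
  refine adj_of_le_finrank_inf h ?_
  rw [X.2, Y.2] at *
  omega

theorem finrank_sup_of_adj {X Y : 𝔾} (h : (grassmannGraph R V k).Adj X Y) :
    finrank R ↥(X.1 ⊔ Y.1) = k + 1 := by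
  have := finrank_sup_add_finrank_inf_eq X.1 Y.1
  have := finrank_inf_lt h.1
  rw [X.2, Y.2, h.2] at *
  omega

theorem isClique_star {Z : Submodule R V} (hZ : finrank R Z = k - 1) :
    (grassmannGraph R V k).IsClique (grassmannStar Z) :=
  fun _ hX _ hY h => adj_of_le_finrank_inf h (hZ ▸ finrank_mono (le_inf hX hY))

theorem isClique_top {U : Submodule R V} (hU : finrank R U = k + 1) :
    (grassmannGraph R V k).IsClique (grassmannTop U) :=
  fun _ hX _ hY h => adj_of_finrank_sup_le h (hU ▸ finrank_mono (sup_le hX hY))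

theorem inf_le_or_le_sup_of_adj {X Y W : 𝔾} (hXY : (grassmannGraph R V k).Adj X Y)
    (hXW : (grassmannGraph R V k).Adj X W) (hYW : (grassmannGraph R V k).Adj Y W) :
    X.1 ⊓ Y.1 ≤ W.1 ∨ W.1 ≤ X.1 ⊔ Y.1 := by
  have hWX : finrank R ↥(W.1 ⊓ X.1) = k - 1 := inf_comm X.1 W.1 ▸ hXW.2
  have hWY : finrank R ↥(W.1 ⊓ Y.1) = k - 1 := inf_comm Y.1 W.1 ▸ hYW.2
  by_cases h : W.1 ⊓ X.1 = W.1 ⊓ Y.1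
  · left
    have : W.1 ⊓ X.1 = X.1 ⊓ Y.1 :=
      eq_of_le_of_finrank_eq (le_inf inf_le_right (h ▸ inf_le_right)) (hWX.trans hXY.2.symm)
    exact this ▸ inf_le_left
  · right
    rw [← sup_eq_of_ne_of_finrank_eq inf_le_left inf_le_left h (hWX.trans hWY.symm)
      (by rw [W.2, hWX]; omega)]
    exact sup_le_sup inf_le_right inf_le_right

theorem adj_of_isOnLine {X Y W A : 𝔾} (hXY : (grassmannGraph R V k).Adj X Y)
    (hAX : (grassmannGraph R V k).Adj A X) (hAY : (grassmannGraph R V k).Adj A Y)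
    (hW : IsOnLine X.1 Y.1 W.1) (hAW : A ≠ W) : (grassmannGraph R V k).Adj A W := by
  rcases inf_le_or_le_sup_of_adj hXY hAX.symm hAY.symm with h | h
  · exact adj_of_le_finrank_inf hAW (hXY.2 ▸ finrank_mono (le_inf h hW.1))
  · exact adj_of_finrank_sup_le hAW (finrank_sup_of_adj hXY ▸ finrank_mono (sup_le h hW.2))

theorem eq_grassmannStar_of_isMaxClique {M : Set 𝔾} (hM : IsMaxClique (grassmannGraph R V k) M)
    {X Y W : 𝔾} (hX : X ∈ M) (hY : Y ∈ M) (hW : W ∈ M) (hXY : X ≠ Y)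
    (hZW : X.1 ⊓ Y.1 ≤ W.1) (hWU : ¬W.1 ≤ X.1 ⊔ Y.1) : M = grassmannStar (X.1 ⊓ Y.1) := by
  have hXW : X ≠ W := by rintro rfl; exact hWU le_sup_left
  have hXW_inf : X.1 ⊓ W.1 = X.1 ⊓ Y.1 := (eq_of_le_of_finrank_eq (le_inf inf_le_left hZW)
    ((hM.1 hX hY hXY).2.trans (hM.1 hX hW hXW).2.symm)).symm
  have hsup_inf : (X.1 ⊔ Y.1) ⊓ (X.1 ⊔ W.1) = X.1 := by
    refine inf_eq_of_ne_of_finrank_eq le_sup_left le_sup_left (fun h => hWU (h ▸ le_sup_right))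
      ?_ (by rw [finrank_sup_of_adj (hM.1 hX hY hXY), X.2])
    rw [finrank_sup_of_adj (hM.1 hX hY hXY), finrank_sup_of_adj (hM.1 hX hW hXW)]
  refine hM.2 _ (isClique_star (hM.1 hX hY hXY).2) fun D hD => ?_
  show X.1 ⊓ Y.1 ≤ D.1
  rcases eq_or_ne X D with rfl | hXD
  · exact inf_le_left
  rcases eq_or_ne Y D with rfl | hYD
  · exact inf_le_right
  rcases eq_or_ne W D with rfl | hWD
  · exact hZW
  -- otherwise `D ≤ (X ⊔ Y) ⊓ (X ⊔ W) = X`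
  by_contra hZD
  have hDU := (inf_le_or_le_sup_of_adj (hM.1 hX hY hXY) (hM.1 hX hD hXD)
    (hM.1 hY hD hYD)).resolve_left hZD
  have hDXW := (inf_le_or_le_sup_of_adj (hM.1 hX hW hXW) (hM.1 hX hD hXD)
    (hM.1 hW hD hWD)).resolve_left (hXW_inf ▸ hZD)
  have hDX : D.1 ≤ X.1 := hsup_inf ▸ le_inf hDU hDXW
  exact hXD (Subtype.ext (eq_of_le_of_finrank_eq hDX (D.2.trans X.2.symm))).symm

theorem eq_grassmannTop_of_isMaxClique {M : Set 𝔾} (hM : IsMaxClique (grassmannGraph R V k) M)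
    {X Y W : 𝔾} (hX : X ∈ M) (hY : Y ∈ M) (hW : W ∈ M) (hXY : X ≠ Y)
    (hWU : W.1 ≤ X.1 ⊔ Y.1) (hZW : ¬X.1 ⊓ Y.1 ≤ W.1) : M = grassmannTop (X.1 ⊔ Y.1) := by
  have hXW : X ≠ W := by rintro rfl; exact hZW inf_le_left
  have hXW_sup : X.1 ⊔ W.1 = X.1 ⊔ Y.1 := eq_of_le_of_finrank_eq (sup_le le_sup_left hWU)
    (by rw [finrank_sup_of_adj (hM.1 hX hW hXW), finrank_sup_of_adj (hM.1 hX hY hXY)])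
  have hinf_sup : X.1 ⊓ Y.1 ⊔ X.1 ⊓ W.1 = X.1 := by
    refine sup_eq_of_ne_of_finrank_eq inf_le_left inf_le_left (fun h => hZW (h ▸ inf_le_right))
      ((hM.1 hX hY hXY).2.trans (hM.1 hX hW hXW).2.symm) ?_
    rw [X.2, (hM.1 hX hY hXY).2]
    omega
  refine hM.2 _ (isClique_top (finrank_sup_of_adj (hM.1 hX hY hXY))) fun D hD => ?_
  show D.1 ≤ X.1 ⊔ Y.1
  rcases eq_or_ne X D with rfl | hXD
  · exact le_sup_left
  rcases eq_or_ne Y D with rfl | hYD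
  · exact le_sup_right
  rcases eq_or_ne W D with rfl | hWD
  · exact hWU
  -- otherwise `X = X ⊓ Y ⊔ X ⊓ W ≤ D`
  by_contra hDU
  have hZD := (inf_le_or_le_sup_of_adj (hM.1 hX hY hXY) (hM.1 hX hD hXD)
    (hM.1 hY hD hYD)).resolve_right hDU
  have hXWD := (inf_le_or_le_sup_of_adj (hM.1 hX hW hXW) (hM.1 hX hD hXD)
    (hM.1 hW hD hWD)).resolve_right (hXW_sup ▸ hDU)
  have hXD' : X.1 ≤ D.1 := hinf_sup ▸ sup_le hZD hXWD
  exact hXD (Subtype.ext (eq_of_le_of_finrank_eq hXD' (X.2.trans D.2.symm)))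

theorem eq_of_isMaxClique_of_not_isOnLine {M₁ M₂ : Set 𝔾}
    (hM₁ : IsMaxClique (grassmannGraph R V k) M₁) (hM₂ : IsMaxClique (grassmannGraph R V k) M₂)
    {X Y W : 𝔾} (hX₁ : X ∈ M₁) (hY₁ : Y ∈ M₁) (hW₁ : W ∈ M₁) (hX₂ : X ∈ M₂) (hY₂ : Y ∈ M₂)
    (hW₂ : W ∈ M₂) (hXY : X ≠ Y) (hXYW : ¬IsOnLine X.1 Y.1 W.1) : M₁ = M₂ := by
  by_cases hZW : X.1 ⊓ Y.1 ≤ W.1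
  · have hWU : ¬W.1 ≤ X.1 ⊔ Y.1 := fun h => hXYW ⟨hZW, h⟩
    rw [eq_grassmannStar_of_isMaxClique hM₁ hX₁ hY₁ hW₁ hXY hZW hWU,
      eq_grassmannStar_of_isMaxClique hM₂ hX₂ hY₂ hW₂ hXY hZW hWU]
  · have hXW : X ≠ W := by rintro rfl; exact hZW inf_le_left
    have hYW : Y ≠ W := by rintro rfl; exact hZW inf_le_right
    have hWU := (inf_le_or_le_sup_of_adj (hM₁.1 hX₁ hY₁ hXY) (hM₁.1 hX₁ hW₁ hXW)
      (hM₁.1 hY₁ hW₁ hYW)).resolve_left hZW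
    rw [eq_grassmannTop_of_isMaxClique hM₁ hX₁ hY₁ hW₁ hXY hWU hZW,
      eq_grassmannTop_of_isMaxClique hM₂ hX₂ hY₂ hW₂ hXY hWU hZW]

theorem nonempty_of_le_finrank (hk : k ≤ finrank R V) : Nonempty 𝔾 :=
  let ⟨p, _, hp⟩ := (⊤ : Submodule R V).exists_le_finrank_eq (by rwa [finrank_top])
  ⟨⟨p, hp⟩⟩

theorem exists_adj (hk : 1 ≤ k) (hkn : k < finrank R V) (X : 𝔾) :
    ∃ Y, (grassmannGraph R V k).Adj X Y := by
  obtain ⟨H, hHX, hH⟩ := X.1.exists_le_finrank_eq (m := k - 1) (by rw [X.2]; omega)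
  obtain ⟨v, hv⟩ := exists_notMem_of_finrank_lt (U := X.1) (by rwa [X.2])
  refine ⟨⟨H ⊔ span R {v}, by rw [finrank_sup_span_singleton fun h => hv (hHX h), hH]; omega⟩, ?_⟩
  refine adj_of_le_finrank_inf
    (ne_of_mem_of_notMem (mem_sup_right (mem_span_singleton_self v)) hv).symm ?_
  exact hH.ge.trans (finrank_mono (le_inf hHX le_sup_left))

theorem exists_not_isOnLine_of_isMaxClique (hk : 1 ≤ k) (hkn : k + 2 ≤ finrank R V)
    {C : Set 𝔾} (hC : IsMaxClique (grassmannGraph R V k) C) :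
    ∃ X ∈ C, ∃ Y ∈ C, X ≠ Y ∧ ∃ W ∈ C, ¬IsOnLine X.1 Y.1 W.1 := by
  have := nonempty_of_le_finrank (R := R) (V := V) (k := k) (by omega)
  obtain ⟨X, hX⟩ := hC.nonempty
  obtain ⟨Y, hY, hYX⟩ := hC.exists_ne (exists_adj hk (by omega)) X
  refine ⟨X, hX, Y, hY, hYX.symm, ?_⟩
  by_contra! hline
  have hXY := hC.1 hX hY hYX.symm
  have hZU : X.1 ⊓ Y.1 ≤ X.1 ⊔ Y.1 := inf_le_sup
  obtain ⟨w, hw⟩ := exists_notMem_of_finrank_lt (U := X.1 ⊔ Y.1)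
    (by rw [finrank_sup_of_adj hXY]; omega)
  -- `C` lies in the star of `X ⊓ Y`, hence is that star, which is not contained in a line
  let W : 𝔾 := ⟨X.1 ⊓ Y.1 ⊔ span R {w}, by
    rw [finrank_sup_span_singleton fun h => hw (hZU h), hXY.2]; omega⟩
  have hWC : W ∈ C := by
    rw [hC.2 _ (isClique_star hXY.2) fun D hD => (hline D hD).1]
    exact (le_sup_left : X.1 ⊓ Y.1 ≤ W.1)
  exact hw ((hline W hWC).2 (mem_sup_right (mem_span_singleton_self w)))

theorem exists_adj_adj_not_adj_of_inf_le (hk : 2 ≤ k) {X Y W : 𝔾}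
    (hXY : (grassmannGraph R V k).Adj X Y) (hZW : X.1 ⊓ Y.1 ≤ W.1) (hWU : ¬W.1 ≤ X.1 ⊔ Y.1) :
    ∃ A, (grassmannGraph R V k).Adj A X ∧ (grassmannGraph R V k).Adj A Y ∧
      A ≠ W ∧ ¬(grassmannGraph R V k).Adj A W := by
  have hZ : finrank R ↥(X.1 ⊓ Y.1) = k - 1 := hXY.2
  have hU : finrank R ↥(X.1 ⊔ Y.1) = k + 1 := finrank_sup_of_adj hXY
  -- `A` is a hyperplane of `X ⊔ Y` not containing `X ⊓ Y`
  obtain ⟨z, hzZ, hz⟩ := exists_mem_ne_zero_of_ne_bot (p := X.1 ⊓ Y.1)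
    (by rintro h; rw [h, finrank_bot] at hZ; omega)
  have hZU : X.1 ⊓ Y.1 ≤ X.1 ⊔ Y.1 := inf_le_sup
  obtain ⟨H, hHU, hH, hzH⟩ := exists_le_finrank_add_one_eq_notMem (hZU hzZ) hz
  let A : 𝔾 := ⟨H, by omega⟩
  have hAX : A ≠ X := (ne_of_mem_of_notMem (mem_inf.mp hzZ).1 hzH).symm
  have hAY : A ≠ Y := (ne_of_mem_of_notMem (mem_inf.mp hzZ).2 hzH).symm
  have hWU_inf : X.1 ⊓ Y.1 = W.1 ⊓ (X.1 ⊔ Y.1) := by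
    refine eq_of_le_of_finrank_le (le_inf hZW hZU) ?_
    have := finrank_lt_finrank_of_lt (inf_lt_left.mpr hWU)
    rw [W.2] at this
    omega
  have hAW : A.1 ⊓ W.1 ≤ H ⊓ (X.1 ⊓ Y.1) :=
    le_inf inf_le_left (hWU_inf ▸ le_inf inf_le_right (inf_le_left.trans hHU))
  have hlt := finrank_lt_finrank_of_lt (inf_lt_right.mpr fun h => hzH (h hzZ))
  refine ⟨A, adj_of_finrank_sup_le hAX (hU ▸ finrank_mono (sup_le hHU le_sup_left)),
    adj_of_finrank_sup_le hAY (hU ▸ finrank_mono (sup_le hHU le_sup_right)),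
    ne_and_not_adj_of_finrank_inf_lt ?_⟩
  exact (finrank_mono hAW).trans_lt (hZ ▸ hlt)

theorem exists_adj_adj_not_adj_of_le_sup (hkn : k + 2 ≤ finrank R V) {X Y W : 𝔾}
    (hXY : (grassmannGraph R V k).Adj X Y) (hWU : W.1 ≤ X.1 ⊔ Y.1) (hZW : ¬X.1 ⊓ Y.1 ≤ W.1) :
    ∃ A, (grassmannGraph R V k).Adj A X ∧ (grassmannGraph R V k).Adj A Y ∧
      A ≠ W ∧ ¬(grassmannGraph R V k).Adj A W := by
  have hZ : finrank R ↥(X.1 ⊓ Y.1) = k - 1 := hXY.2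
  have hZU : X.1 ⊓ Y.1 ≤ X.1 ⊔ Y.1 := inf_le_sup
  -- `A` is spanned by `X ⊓ Y` and a vector outside `X ⊔ Y`
  obtain ⟨a, ha⟩ := exists_notMem_of_finrank_lt (U := X.1 ⊔ Y.1)
    (by rw [finrank_sup_of_adj hXY]; omega)
  let A : 𝔾 := ⟨X.1 ⊓ Y.1 ⊔ span R {a}, by
    have := finrank_inf_lt hXY.1
    rw [finrank_sup_span_singleton fun h => ha (hZU h)]; omega⟩
  have haA : a ∈ A.1 := mem_sup_right (mem_span_singleton_self a)
  have hAU : A.1 ⊓ (X.1 ⊔ Y.1) = X.1 ⊓ Y.1 := by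
    rw [sup_inf_assoc_of_le _ hZU, (disjoint_span_singleton_of_notMem ha).symm.eq_bot,
      sup_bot_eq]
  have hAW : A.1 ⊓ W.1 ≤ X.1 ⊓ Y.1 ⊓ W.1 :=
    le_inf (hAU ▸ le_inf inf_le_left (inf_le_right.trans hWU)) inf_le_right
  have hlt := finrank_lt_finrank_of_lt (inf_lt_left.mpr hZW)
  have hAX : A ≠ X := ne_of_mem_of_notMem haA fun h => ha (mem_sup_left h)
  have hAY : A ≠ Y := ne_of_mem_of_notMem haA fun h => ha (mem_sup_right h)
  refine ⟨A, adj_of_le_finrank_inf hAX (hZ ▸ finrank_mono (le_inf le_sup_left inf_le_left)),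
    adj_of_le_finrank_inf hAY (hZ ▸ finrank_mono (le_inf le_sup_left inf_le_right)),
    ne_and_not_adj_of_finrank_inf_lt ?_⟩
  exact (finrank_mono hAW).trans_lt (hZ ▸ hlt)

theorem exists_adj_adj_not_adj_of_not_isOnLine (hk : 2 ≤ k) (hkn : k + 2 ≤ finrank R V)
    {X Y W : 𝔾} (hXY : (grassmannGraph R V k).Adj X Y) (hXW : (grassmannGraph R V k).Adj X W)
    (hYW : (grassmannGraph R V k).Adj Y W) (hXYW : ¬IsOnLine X.1 Y.1 W.1) :
    ∃ A, (grassmannGraph R V k).Adj A X ∧ (grassmannGraph R V k).Adj A Y ∧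
      A ≠ W ∧ ¬(grassmannGraph R V k).Adj A W := by
  rcases inf_le_or_le_sup_of_adj hXY hXW hYW with hZW | hWU
  · exact exists_adj_adj_not_adj_of_inf_le hk hXY hZW fun h => hXYW ⟨hZW, h⟩
  · exact exists_adj_adj_not_adj_of_le_sup hkn hXY hWU fun h => hXYW ⟨h, hWU⟩

end grassmannGraph

theorem IsGraphEmbedding.not_isOnLine_of_not_isOnLine
    {R V R' V' : Type*} [DivisionRing R] [AddCommGroup V] [Module R V] [FiniteDimensional R V]
    [DivisionRing R'] [AddCommGroup V'] [Module R' V'] [FiniteDimensional R' V'] {k k' : ℕ}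
    (hk : 2 ≤ k) (hkn : k + 2 ≤ finrank R V)
    {f : {W : Submodule R V // finrank R W = k} → {W : Submodule R' V' // finrank R' W = k'}}
    (hf : IsGraphEmbedding (grassmannGraph R V k) (grassmannGraph R' V' k') f)
    {X Y W : {W : Submodule R V // finrank R W = k}} (hXY : (grassmannGraph R V k).Adj X Y)
    (hXW : (grassmannGraph R V k).Adj X W) (hYW : (grassmannGraph R V k).Adj Y W)
    (hXYW : ¬IsOnLine X.1 Y.1 W.1) : ¬IsOnLine (f X).1 (f Y).1 (f W).1 := by
  intro hline
  obtain ⟨A, hAX, hAY, hAW, hnAW⟩ :=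
    grassmannGraph.exists_adj_adj_not_adj_of_not_isOnLine hk hkn hXY hXW hYW hXYW
  exact hnAW <| (hf.2 A W).2 <| grassmannGraph.adj_of_isOnLine ((hf.2 X Y).1 hXY)
    ((hf.2 A X).1 hAX) ((hf.2 A Y).1 hAY) hline (hf.1.ne hAW)

theorem embedding_maximal_clique_unique_general
    (R V : Type*) [DivisionRing R] [AddCommGroup V] [Module R V] [FiniteDimensional R V]
    (R' V' : Type*) [DivisionRing R'] [AddCommGroup V'] [Module R' V'] [FiniteDimensional R' V']
    (n k k' : ℕ) (hn : Module.finrank R V = n)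
    (hk1 : 2 ≤ k) (hk2 : k ≤ n - 2)
    (f : {W : Submodule R V // Module.finrank R W = k} →
         {W : Submodule R' V' // Module.finrank R' W = k'})
    (hf : IsGraphEmbedding (grassmannGraph R V k) (grassmannGraph R' V' k') f) :
    ∀ C : Set {W : Submodule R V // Module.finrank R W = k},
      IsMaxClique (grassmannGraph R V k) C →
      ∃! C' : Set {W : Submodule R' V' // Module.finrank R' W = k'},
        IsMaxClique (grassmannGraph R' V' k') C' ∧ f '' C ⊆ C' := by
  intro C hC
  have hkn : k + 2 ≤ finrank R V := by omega
  obtain ⟨X, hX, Y, hY, hXY, W, hW, hXYW⟩ :=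
    grassmannGraph.exists_not_isOnLine_of_isMaxClique (by omega) hkn hC
  have hXW : X ≠ W := by rintro rfl; exact hXYW ⟨inf_le_left, le_sup_left⟩
  have hYW : Y ≠ W := by rintro rfl; exact hXYW ⟨inf_le_right, le_sup_right⟩
  have hfXYW := hf.not_isOnLine_of_not_isOnLine hk1 hkn (hC.1 hX hY hXY) (hC.1 hX hW hXW)
    (hC.1 hY hW hYW) hXYW
  obtain ⟨M, hM, hCM⟩ := exists_isMaxClique_superset (hf.isClique_image hC.1)
  refine ⟨M, ⟨hM, hCM⟩, fun M' ⟨hM', hCM'⟩ => ?_⟩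
  exact grassmannGraph.eq_of_isMaxClique_of_not_isOnLine hM' hM (hCM' ⟨X, hX, rfl⟩)
    (hCM' ⟨Y, hY, rfl⟩) (hCM' ⟨W, hW, rfl⟩) (hCM ⟨X, hX, rfl⟩) (hCM ⟨Y, hY, rfl⟩)
    (hCM ⟨W, hW, rfl⟩) (hf.1.ne hXY) hfXYW

/-- For every embedding `f` of `Γ_k(V)` in `Γ_{k'}(V')` (with
`2 ≤ k ≤ n-2`, `2 ≤ k' ≤ n'-2`), the image of every maximal clique of `Γ_k(V)` is
contained in precisely one maximal clique of `Γ_{k'}(V')`. -/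
theorem embedding_maximal_clique_unique
    (R V : Type*) [DivisionRing R] [AddCommGroup V] [Module R V] [FiniteDimensional R V]
    (R' V' : Type*) [DivisionRing R'] [AddCommGroup V'] [Module R' V'] [FiniteDimensional R' V']
    (n k n' k' : ℕ) (hn : Module.finrank R V = n) (hn' : Module.finrank R' V' = n')
    (hk1 : 2 ≤ k) (hk2 : k ≤ n - 2) (hk1' : 2 ≤ k') (hk2' : k' ≤ n' - 2)
    (f : {W : Submodule R V // Module.finrank R W = k} →
         {W : Submodule R' V' // Module.finrank R' W = k'})
    (hf : IsGraphEmbedding (grassmannGraph R V k) (grassmannGraph R' V' k') f) :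
    ∀ C : Set {W : Submodule R V // Module.finrank R W = k},
      IsMaxClique (grassmannGraph R V k) C →
      ∃! C' : Set {W : Submodule R' V' // Module.finrank R' W = k'},
        IsMaxClique (grassmannGraph R' V' k') C' ∧ f '' C ⊆ C' :=
  embedding_maximal_clique_unique_general R V R' V' n k k' hn hk1 hk2 f hf
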